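/- The map γ₂: H → A₂ defined by γ₂(D̃^p t^m n^r) = (-1)^p q^p D^p c^m d^r is convolution invertible, with convolution inverse γ̄₂(D̃^p t^m n^r) = (-1)^p q^{-p + r(r-1)} d^r c^{-m} D^{-r-p}. -/

import Mathlib

/-!
On the basis `D̃^p t^m n^r`, the coproduct formula for `n^r` writes either convolution product at
`D̃^p t^m n^r` as a sum over `j + s = r` of `binom(r, j) q^{js}` times a product of two ordered
monomials in `D, c, d`. The commutation relations of `A₂` turn every such product into one fixed
monomial (`D^{-r} c^r d^r`, resp. `c^{-r} d^r`) times `(-1)^s` and a power of `q` that does not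
depend on `j`. The sum is therefore `(1 - 1)^r` times that monomial, and `0^r = ε(D̃^p t^m n^r)`.

Splitting the coproduct of `D̃^p t^m n^r` into basis vectors needs `t D̃ = D̃ t`, which is forced by
the coproduct: comparing `Δ(n)^2` with `Δ(n^2)` on the `n^2`-coordinate of the first factor gives
`w^2 + κ w n = D̃^2 t^{-2}` with `w = D̃ t^{-1}`, and applying `Δ` to this identity leaves
`κ (D̃ - D̃^2 t^{-2}) ⊗ w n = 0`, so `κ = 0`.
-/

open TensorProduct

variable {k A H : Type*} [Field k] [Ring A] [Algebra k A] [Ring H] [Bialgebra k H]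

/-- The convolution product of two linear maps `H → A`. -/
noncomputable def conv (f g : H →ₗ[k] A) : H →ₗ[k] A :=
  (LinearMap.mul' k A) ∘ₗ (TensorProduct.map f g) ∘ₗ (Coalgebra.comul (R := k) (A := H))

/-- The cleaving map `γ₂ : H → A₂` defined on the basis `{D̃^p t^m n^r}` of
`H = Õ_q(GL(2))/(c)` by `γ₂(D̃^p t^m n^r) = (-1)^p q^p D^p c^m d^r`. -/
noncomputable def gammaTwo (q : kˣ) (d : A) (cu Du : Aˣ)
    (bH : Module.Basis (ℤ × ℤ × ℕ) k H) : H →ₗ[k] A :=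
  bH.constr k fun pmr =>
    ((((-q) ^ pmr.1 : kˣ) : k)) •
      (((Du ^ pmr.1 : Aˣ) : A) * ((cu ^ pmr.2.1 : Aˣ) : A) * d ^ pmr.2.2)

/-- The map `γ̄₂ : H → A₂` defined on the basis `{D̃^p t^m n^r}` by
`γ̄₂(D̃^p t^m n^r) = (-1)^p q^{-p + r(r-1)} d^r c^{-m} D^{-r-p}`. -/
noncomputable def gammaTwoBar (q : kˣ) (d : A) (cu Du : Aˣ)
    (bH : Module.Basis (ℤ × ℤ × ℕ) k H) : H →ₗ[k] A :=
  bH.constr k fun pmr =>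
    ((((-1 : kˣ) ^ pmr.1 * q ^ (-pmr.1 + ((pmr.2.2 * (pmr.2.2 - 1) : ℕ) : ℤ)) : kˣ) : k)) •
      (d ^ pmr.2.2 * ((cu ^ (-pmr.2.1) : Aˣ) : A) *
        ((Du ^ (-(pmr.2.2 : ℤ) - pmr.1) : Aˣ) : A))

section QCommutation

variable {R : Type*} [CommRing R] [Algebra R A]

theorem pow_mul_eq_smul_mul_pow {v x : A} {ν : R} (h : v * x = ν • (x * v)) (n : ℕ) :
    v ^ n * x = ν ^ n • (x * v ^ n) := by
  induction n with
  | zero => simp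
  | succ n ih =>
    rw [pow_succ, mul_assoc, h, mul_smul_comm, ← mul_assoc, ih, smul_mul_assoc, smul_smul,
      mul_assoc, ← pow_succ, ← pow_succ']

theorem mul_pow_eq_smul_pow_mul {v x : A} {ν : R} (h : v * x = ν • (x * v)) (n : ℕ) :
    v * x ^ n = ν ^ n • (x ^ n * v) := by
  have hsc : SemiconjBy v x (ν • x) := by rw [SemiconjBy, h, smul_mul_assoc]
  rw [(hsc.pow_right n).eq, smul_pow, smul_mul_assoc]

theorem mul_eq_inv_smul_mul_of_mul_eq_smul {u x : A} {μ : Rˣ} (h : u * x = (μ : R) • (x * u)) :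
    x * u = ((μ⁻¹ : Rˣ) : R) • (u * x) := by
  rw [h, smul_smul, ← Units.val_mul, inv_mul_cancel, Units.val_one, one_smul]

theorem Units.zpow_mul_eq_smul_mul_zpow {u : Aˣ} {x : A} {μ : Rˣ}
    (h : (u : A) * x = (μ : R) • (x * u)) (a : ℤ) :
    ((u ^ a : Aˣ) : A) * x = ((μ ^ a : Rˣ) : R) • (x * ((u ^ a : Aˣ) : A)) := by
  have hinv : ((u⁻¹ : Aˣ) : A) * x = ((μ⁻¹ : Rˣ) : R) • (x * ((u⁻¹ : Aˣ) : A)) := by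
    calc ((u⁻¹ : Aˣ) : A) * x = ((u⁻¹ : Aˣ) : A) * (x * u) * ((u⁻¹ : Aˣ) : A) := by
          rw [mul_assoc, mul_assoc, Units.mul_inv, mul_one]
      _ = ((μ⁻¹ : Rˣ) : R) • (x * ((u⁻¹ : Aˣ) : A)) := by
          rw [mul_eq_inv_smul_mul_of_mul_eq_smul h, mul_smul_comm, smul_mul_assoc, ← mul_assoc,
            Units.inv_mul, one_mul]
  obtain ⟨n, rfl | rfl⟩ := Int.eq_nat_or_neg a
  · simpa only [zpow_natCast, Units.val_pow_eq_pow_val] using pow_mul_eq_smul_mul_pow h n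
  · simpa only [zpow_neg, zpow_natCast, ← inv_pow, Units.val_pow_eq_pow_val] using
      pow_mul_eq_smul_mul_pow hinv n

theorem Units.zpow_mul_pow_eq_smul_pow_mul_zpow {u : Aˣ} {x : A} {μ : Rˣ}
    (h : (u : A) * x = (μ : R) • (x * u)) (a : ℤ) (b : ℕ) :
    ((u ^ a : Aˣ) : A) * x ^ b = ((μ ^ (a * b) : Rˣ) : R) • (x ^ b * ((u ^ a : Aˣ) : A)) := by
  rw [mul_pow_eq_smul_pow_mul (Units.zpow_mul_eq_smul_mul_zpow h a), zpow_mul, zpow_natCast,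
    Units.val_pow_eq_pow_val]

theorem Units.zpow_mul_zpow_eq_smul_zpow_mul_zpow {u v : Aˣ} {μ : Rˣ}
    (h : (u : A) * v = (μ : R) • ((v : A) * u)) (a b : ℤ) :
    ((u ^ a : Aˣ) : A) * ((v ^ b : Aˣ) : A)
      = ((μ ^ (a * b) : Rˣ) : R) • (((v ^ b : Aˣ) : A) * ((u ^ a : Aˣ) : A)) := by
  have hv := mul_eq_inv_smul_mul_of_mul_eq_smul (Units.zpow_mul_eq_smul_mul_zpow h a)
  rw [Units.zpow_mul_eq_smul_mul_zpow hv b, smul_smul, ← Units.val_mul, inv_zpow, ← zpow_mul,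
    Units.mul_inv, one_smul]

variable {q : Rˣ} {d : A} {c D : Aˣ}

def qMonomial (d : A) (c D : Aˣ) (x y : ℤ) (z : ℕ) : A :=
  ((D ^ x : Aˣ) : A) * ((c ^ y : Aˣ) : A) * d ^ z

theorem qMonomial_mul (hcd : (c : A) * d = ((q⁻¹ : Rˣ) : R) • (d * c))
    (hcD : (c : A) * D = (((q ^ 2)⁻¹ : Rˣ) : R) • ((D : A) * c)) (hdD : d * D = D * d)
    (x y x' y' : ℤ) (z z' : ℕ) :
    qMonomial d c D x y z * qMonomial d c D x' y' z'
      = ((q ^ (y' * z - 2 * y * x') : Rˣ) : R) • qMonomial d c D (x + x') (y + y') (z + z') := by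
  unfold qMonomial
  calc ((D ^ x : Aˣ) : A) * ((c ^ y : Aˣ) : A) * d ^ z *
        (((D ^ x' : Aˣ) : A) * ((c ^ y' : Aˣ) : A) * d ^ z')
      = ((D ^ x : Aˣ) : A) * (((c ^ y : Aˣ) : A) * ((D ^ x' : Aˣ) : A)) *
          (d ^ z * ((c ^ y' : Aˣ) : A)) * d ^ z' := by
        simp only [mul_assoc]
        rw [← mul_assoc (d ^ z), ((Commute.units_zpow_right hdD x').pow_left z).eq, mul_assoc]
    _ = ((((q⁻¹ ^ (y' * z : ℤ))⁻¹) * ((q ^ 2)⁻¹ ^ (y * x')) : Rˣ) : R) •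
          (((D ^ x : Aˣ) : A) * ((D ^ x' : Aˣ) : A) * (((c ^ y : Aˣ) : A) * ((c ^ y' : Aˣ) : A))
            * (d ^ z * d ^ z')) := by
        rw [Units.zpow_mul_zpow_eq_smul_zpow_mul_zpow hcD,
          mul_eq_inv_smul_mul_of_mul_eq_smul (Units.zpow_mul_pow_eq_smul_pow_mul_zpow hcd y' z)]
        simp only [smul_mul_assoc, mul_smul_comm, mul_assoc, Units.val_mul, smul_smul]
    _ = _ := by
        rw [zpow_add D, zpow_add c, pow_add, Units.val_mul (D ^ x), Units.val_mul (c ^ y)]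
        congr 2
        apply Additive.ofMul.injective
        simp only [ofMul_mul, ofMul_zpow, ofMul_inv, ofMul_pow]
        module

theorem pow_mul_zpow_mul_zpow_eq_smul_qMonomial
    (hcd : (c : A) * d = ((q⁻¹ : Rˣ) : R) • (d * c))
    (hcD : (c : A) * D = (((q ^ 2)⁻¹ : Rˣ) : R) • ((D : A) * c)) (hdD : d * D = D * d)
    (x y : ℤ) (z : ℕ) :
    d ^ z * ((c ^ y : Aˣ) : A) * ((D ^ x : Aˣ) : A)
      = ((q ^ (y * z - 2 * y * x) : Rˣ) : R) • qMonomial d c D x y z := by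
  calc d ^ z * ((c ^ y : Aˣ) : A) * ((D ^ x : Aˣ) : A)
      = qMonomial d c D 0 0 z * qMonomial d c D 0 y 0 * qMonomial d c D x 0 0 := by
        simp [qMonomial]
    _ = _ := by
        rw [qMonomial_mul hcd hcD hdD, smul_mul_assoc, qMonomial_mul hcd hcD hdD, smul_smul,
          ← Units.val_mul, ← zpow_add]
        simp only [zero_add, add_zero, mul_zero, zero_mul, sub_zero, zero_sub,
          ← sub_eq_add_neg]

end QCommutation

theorem TensorProduct.tmul_ne_zero_of_ne_zero {K V W : Type*} [Field K] [AddCommGroup V]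
    [Module K V] [AddCommGroup W] [Module K W] {v : V} {w : W} (hv : v ≠ 0) (hw : w ≠ 0) :
    v ⊗ₜ[K] w ≠ 0 := by
  obtain ⟨f, hf⟩ := Module.Projective.exists_dual_ne_zero K hv
  obtain ⟨g, hg⟩ := Module.Projective.exists_dual_ne_zero K hw
  intro h
  apply mul_ne_zero hf hg
  simpa using congrArg (LinearMap.mul' K K ∘ₗ TensorProduct.map f g) h

theorem Coalgebra.eq_zero_of_add_smul_eq {K C : Type*} [Field K] [AddCommGroup C] [Module K C]
    [Coalgebra K C] {x y z g : C} {κ : K}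
    (hx : comul (R := K) x = x ⊗ₜ x) (hy : comul (R := K) y = y ⊗ₜ y)
    (hz : comul (R := K) z = z ⊗ₜ y + g ⊗ₜ z) (hgx : g ≠ x) (hz0 : z ≠ 0)
    (h : y + κ • z = x) : κ = 0 := by
  have hcomul := congrArg (comul (R := K)) h
  rw [map_add, map_smul, hx, hy, hz, ← h] at hcomul
  have : κ • ((g - x) ⊗ₜ[K] z) = 0 := by
    rw [← h]
    simp only [add_tmul, tmul_add, sub_tmul, ← smul_tmul', tmul_smul] at hcomul ⊢
    linear_combination (norm := module) hcomul
  exact (smul_eq_zero.mp this).resolve_right (tmul_ne_zero_of_ne_zero (sub_ne_zero.mpr hgx) hz0)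

theorem commute_of_mul_inv_sq {G : Type*} [Group G] {a b : G}
    (h : (a * b⁻¹) ^ 2 = a ^ 2 * b⁻¹ ^ 2) : Commute b a := by
  rw [sq, sq, sq, mul_assoc, mul_assoc, mul_right_inj, ← mul_assoc, ← mul_assoc,
    mul_left_inj] at h
  exact Commute.inv_left_iff.mp h

theorem sq_add_coord_smul_eq_of_comul_sq (t Dt : Hˣ) (n : H)
    (bH : Module.Basis (ℤ × ℤ × ℕ) k H)
    (hbH : ∀ (p m : ℤ) (r : ℕ),
      bH (p, m, r) = ((Dt ^ p : Hˣ) : H) * ((t ^ m : Hˣ) : H) * n ^ r) (ν : k)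
    (hn1 : Coalgebra.comul (R := k) n
      = n ⊗ₜ ((Dt : H) * ((t⁻¹ : Hˣ) : H)) + (t : H) ⊗ₜ n)
    (hn2 : Coalgebra.comul (R := k) n ^ 2
      = (n ^ 2) ⊗ₜ ((Dt : H) ^ 2 * ((t⁻¹ : Hˣ) : H) ^ 2)
        + ν • (((t : H) * n) ⊗ₜ ((Dt : H) * ((t⁻¹ : Hˣ) : H) * n))
        + ((t : H) ^ 2) ⊗ₜ (n ^ 2)) :
    ((Dt : H) * ((t⁻¹ : Hˣ) : H)) ^ 2
      + bH.coord (0, 0, 2) (n * t) • ((Dt : H) * ((t⁻¹ : Hˣ) : H) * n)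
      = (Dt : H) ^ 2 * ((t⁻¹ : Hˣ) : H) ^ 2 := by
  have h := congrArg (fun x => TensorProduct.lid k H (TensorProduct.map (bH.coord (0, 0, 2))
    LinearMap.id x)) hn2
  simp only [hn1, sq, add_mul, mul_add, Algebra.TensorProduct.tmul_mul_tmul] at h
  simp only [← sq, show n ^ 2 = bH (0, 0, 2) by simp [hbH],
    show (t : H) * n = bH (0, 1, 1) by simp [hbH],
    show (t : H) ^ 2 = bH (0, 2, 0) by simp [hbH]] at h
  simpa [Module.Basis.coord_apply] using h

theorem commute_of_comul_pow (q : kˣ) (t Dt : Hˣ) (n : H)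
    (bH : Module.Basis (ℤ × ℤ × ℕ) k H)
    (hbH : ∀ (p m : ℤ) (r : ℕ),
      bH (p, m, r) = ((Dt ^ p : Hˣ) : H) * ((t ^ m : Hˣ) : H) * n ^ r)
    (hgt : ∀ m : ℤ, Coalgebra.comul (R := k) ((t ^ m : Hˣ) : H) =
      ((t ^ m : Hˣ) : H) ⊗ₜ[k] ((t ^ m : Hˣ) : H))
    (hgD : ∀ p : ℤ, Coalgebra.comul (R := k) ((Dt ^ p : Hˣ) : H) =
      ((Dt ^ p : Hˣ) : H) ⊗ₜ[k] ((Dt ^ p : Hˣ) : H))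
    (hΔnr : ∀ r : ℕ, Coalgebra.comul (R := k) (n ^ r) =
      ∑ j ∈ Finset.range (r + 1),
        ((r.choose j : k) * ((q ^ (j * (r - j)) : kˣ) : k)) •
          ((((t ^ j : Hˣ) : H) * n ^ (r - j)) ⊗ₜ[k]
            (((Dt ^ (r - j) : Hˣ) : H) * ((t ^ ((j : ℤ) - (r : ℤ)) : Hˣ) : H) * n ^ j))) :
    Commute t Dt := by
  set w : H := (Dt : H) * ((t⁻¹ : Hˣ) : H)
  have hn1 : Coalgebra.comul (R := k) n = n ⊗ₜ w + (t : H) ⊗ₜ n := by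
    simpa [Finset.sum_range_succ] using hΔnr 1
  have hsq := sq_add_coord_smul_eq_of_comul_sq t Dt n bH hbH _ hn1
    (by simpa [Finset.sum_range_succ] using hΔnr 2)
  have hDt : Coalgebra.comul (R := k) (Dt : H) = (Dt : H) ⊗ₜ (Dt : H) := by simpa using hgD 1
  have htinv : Coalgebra.comul (R := k) ((t⁻¹ : Hˣ) : H)
      = ((t⁻¹ : Hˣ) : H) ⊗ₜ ((t⁻¹ : Hˣ) : H) := by
    simpa using hgt (-1)
  have hw : Coalgebra.comul (R := k) w = w ⊗ₜ w := by
    rw [Bialgebra.comul_mul, hDt, htinv, Algebra.TensorProduct.tmul_mul_tmul]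
  have hcoord : bH.coord (0, 0, 2) (n * t) = 0 := by
    refine Coalgebra.eq_zero_of_add_smul_eq (g := (Dt : H)) ?_ ?_ ?_ ?_ ?_ hsq
    · simp only [Bialgebra.comul_mul, Bialgebra.comul_pow, hDt, htinv,
        Algebra.TensorProduct.tmul_pow, Algebra.TensorProduct.tmul_mul_tmul]
    · rw [Bialgebra.comul_pow, hw, Algebra.TensorProduct.tmul_pow]
    · rw [Bialgebra.comul_mul, hw, hn1, mul_add, Algebra.TensorProduct.tmul_mul_tmul,
        Algebra.TensorProduct.tmul_mul_tmul, show w * t = Dt by simp [w, mul_assoc], sq]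
    · rw [show (Dt : H) ^ 2 * ((t⁻¹ : Hˣ) : H) ^ 2 = bH (2, -2, 0) by simp [hbH, zpow_neg],
        show (Dt : H) = bH (1, 0, 0) by simp [hbH]]
      exact bH.injective.ne (by decide)
    · rw [show w * n = bH (1, -1, 1) by simp [hbH, w]]
      exact bH.ne_zero _
  rw [hcoord, zero_smul, add_zero] at hsq
  exact commute_of_mul_inv_sq (Units.ext (by simpa using hsq))

theorem comul_basis (q : kˣ) (t Dt : Hˣ) (n : H)
    (bH : Module.Basis (ℤ × ℤ × ℕ) k H)
    (hbH : ∀ (p m : ℤ) (r : ℕ),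
      bH (p, m, r) = ((Dt ^ p : Hˣ) : H) * ((t ^ m : Hˣ) : H) * n ^ r)
    (hgt : ∀ m : ℤ, Coalgebra.comul (R := k) ((t ^ m : Hˣ) : H) =
      ((t ^ m : Hˣ) : H) ⊗ₜ[k] ((t ^ m : Hˣ) : H))
    (hgD : ∀ p : ℤ, Coalgebra.comul (R := k) ((Dt ^ p : Hˣ) : H) =
      ((Dt ^ p : Hˣ) : H) ⊗ₜ[k] ((Dt ^ p : Hˣ) : H))
    (hΔnr : ∀ r : ℕ, Coalgebra.comul (R := k) (n ^ r) =
      ∑ j ∈ Finset.range (r + 1),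
        ((r.choose j : k) * ((q ^ (j * (r - j)) : kˣ) : k)) •
          ((((t ^ j : Hˣ) : H) * n ^ (r - j)) ⊗ₜ[k]
            (((Dt ^ (r - j) : Hˣ) : H) * ((t ^ ((j : ℤ) - (r : ℤ)) : Hˣ) : H) * n ^ j)))
    (htD : Commute t Dt) (p m : ℤ) (r : ℕ) :
    Coalgebra.comul (R := k) (bH (p, m, r)) =
      ∑ x ∈ Finset.HasAntidiagonal.antidiagonal r,
        ((r.choose x.1 : k) * ((q ^ (x.1 * x.2) : kˣ) : k)) •
          (bH (p, m + x.1, x.2) ⊗ₜ[k] bH (p + x.2, m - x.2, x.1)) := by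
  have hmul : ∀ (p' m' : ℤ) (r' : ℕ),
      ((Dt ^ p : Hˣ) : H) * ((t ^ m : Hˣ) : H) * bH (p', m', r') = bH (p + p', m + m', r') := by
    intro p' m' r'
    have hgroup : Dt ^ p * t ^ m * (Dt ^ p' * t ^ m') = Dt ^ (p + p') * t ^ (m + m') := by
      rw [zpow_add, zpow_add, mul_assoc, ← mul_assoc (t ^ m), (htD.zpow_zpow m p').eq]
      group
    rw [hbH, hbH, ← Units.val_mul (Dt ^ (p + p')), ← hgroup]
    simp only [Units.val_mul, mul_assoc]
  rw [Finset.Nat.sum_antidiagonal_eq_sum_range_succ_mk, hbH, Bialgebra.comul_mul,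
    Bialgebra.comul_mul, hgD, hgt, Algebra.TensorProduct.tmul_mul_tmul, hΔnr, Finset.mul_sum]
  refine Finset.sum_congr rfl fun j hj => ?_
  obtain ⟨s, rfl⟩ := Nat.exists_eq_add_of_le (Nat.lt_succ_iff.mp (Finset.mem_range.mp hj))
  have hleft : ((t ^ j : Hˣ) : H) * n ^ s = bH (0, j, s) := by simp [hbH]
  have hright : ((Dt ^ s : Hˣ) : H) * ((t ^ ((j : ℤ) - ((j + s : ℕ) : ℤ)) : Hˣ) : H) * n ^ j
      = bH (s, -s, j) := by
    simp [hbH]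
  rw [Nat.add_sub_cancel_left, mul_smul_comm, Algebra.TensorProduct.tmul_mul_tmul, hleft,
    hright, hmul, hmul]
  simp [sub_eq_add_neg]

theorem counit_basis (t Dt : Hˣ) (n : H) (bH : Module.Basis (ℤ × ℤ × ℕ) k H)
    (hbH : ∀ (p m : ℤ) (r : ℕ),
      bH (p, m, r) = ((Dt ^ p : Hˣ) : H) * ((t ^ m : Hˣ) : H) * n ^ r)
    (hεt : ∀ m : ℤ, Coalgebra.counit (R := k) ((t ^ m : Hˣ) : H) = 1)
    (hεD : ∀ p : ℤ, Coalgebra.counit (R := k) ((Dt ^ p : Hˣ) : H) = 1)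
    (hεn : Coalgebra.counit (R := k) n = 0) (p m : ℤ) (r : ℕ) :
    Coalgebra.counit (R := k) (bH (p, m, r)) = 0 ^ r := by
  rw [hbH, Bialgebra.counit_mul, Bialgebra.counit_mul, hεD, hεt, Bialgebra.counit_pow, hεn,
    one_mul, one_mul]

theorem conv_apply_of_comul_eq_sum {ι : Type*} {s : Finset ι} {c : ι → k} {a b : ι → H}
    {x : H} (h : Coalgebra.comul (R := k) x = ∑ i ∈ s, c i • (a i ⊗ₜ[k] b i))
    (f g : H →ₗ[k] A) :
    conv f g x = ∑ i ∈ s, c i • (f (a i) * g (b i)) := by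
  simp [conv, h]

theorem sum_antidiagonal_choose_mul_neg_one_pow (r : ℕ) :
    ∑ x ∈ Finset.HasAntidiagonal.antidiagonal r, (r.choose x.1 : k) * (-1) ^ x.2 = 0 ^ r := by
  simpa [nsmul_eq_mul, mul_comm] using ((Commute.one_left (-1 : k)).add_pow' r).symm

theorem conv_eq_linearMap_comp_counit_of_alternating (q : kˣ)
    (bH : Module.Basis (ℤ × ℤ × ℕ) k H)
    (hcomul : ∀ (p m : ℤ) (r : ℕ), Coalgebra.comul (R := k) (bH (p, m, r)) =
      ∑ x ∈ Finset.HasAntidiagonal.antidiagonal r,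
        ((r.choose x.1 : k) * ((q ^ (x.1 * x.2) : kˣ) : k)) •
          (bH (p, m + x.1, x.2) ⊗ₜ[k] bH (p + x.2, m - x.2, x.1)))
    (hcounit : ∀ (p m : ℤ) (r : ℕ), Coalgebra.counit (R := k) (bH (p, m, r)) = 0 ^ r)
    (f g : H →ₗ[k] A) (K : ℤ → ℤ → ℕ → A)
    (hK : ∀ (p m : ℤ) (j s : ℕ), ((q ^ (j * s) : kˣ) : k) •
      (f (bH (p, m + j, s)) * g (bH (p + s, m - s, j))) = (-1 : k) ^ s • K p m (j + s))
    (hK0 : ∀ p m : ℤ, K p m 0 = 1) :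
    conv f g = Algebra.linearMap k A ∘ₗ Coalgebra.counit (R := k) (A := H) := by
  refine bH.ext fun ⟨p, m, r⟩ => ?_
  have hterm : ∀ x ∈ Finset.HasAntidiagonal.antidiagonal r,
      ((r.choose x.1 : k) * ((q ^ (x.1 * x.2) : kˣ) : k)) •
        (f (bH (p, m + x.1, x.2)) * g (bH (p + x.2, m - x.2, x.1)))
      = ((r.choose x.1 : k) * (-1) ^ x.2) • K p m r := by
    rintro ⟨j, s⟩ hjs
    rw [Finset.HasAntidiagonal.mem_antidiagonal] at hjs
    rw [mul_smul, hK, hjs, smul_smul]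
  rw [conv_apply_of_comul_eq_sum (hcomul p m r), Finset.sum_congr rfl hterm, ← Finset.sum_smul,
    sum_antidiagonal_choose_mul_neg_one_pow, LinearMap.comp_apply, hcounit,
    Algebra.linearMap_apply]
  cases r with
  | zero => simp [hK0]
  | succ r => simp

theorem Nat.cast_mul_sub_one {R : Type*} [Ring R] (n : ℕ) :
    ((n * (n - 1) : ℕ) : R) = n * (n - 1) := by
  cases n <;> simp

theorem Units.two_zsmul_ofMul_neg_one {M : Type*} [Monoid M] [HasDistribNeg M] :
    (2 : ℤ) • Additive.ofMul (-1 : Mˣ) = 0 := by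
  rw [← ofMul_zpow]
  simp

section Gamma

variable {q : kˣ} {d : A} {cu Du : Aˣ} (bH : Module.Basis (ℤ × ℤ × ℕ) k H)

theorem gammaTwo_basis (p m : ℤ) (r : ℕ) :
    gammaTwo q d cu Du bH (bH (p, m, r)) = (((-q) ^ p : kˣ) : k) • qMonomial d cu Du p m r := by
  rw [gammaTwo, Module.Basis.constr_basis]
  rfl

theorem gammaTwoBar_basis (hcd : (cu : A) * d = ((q⁻¹ : kˣ) : k) • (d * (cu : A)))
    (hcD : (cu : A) * (Du : A) = (((q ^ 2)⁻¹ : kˣ) : k) • ((Du : A) * (cu : A)))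
    (hdD : d * (Du : A) = (Du : A) * d) (p m : ℤ) (r : ℕ) :
    gammaTwoBar q d cu Du bH (bH (p, m, r))
      = (((-1) ^ p * q ^ (-p + r * (r - 1)) * q ^ (-m * r - 2 * -m * (-r - p)) : kˣ) : k) •
          qMonomial d cu Du (-r - p) (-m) r := by
  rw [gammaTwoBar, Module.Basis.constr_basis,
    pow_mul_zpow_mul_zpow_eq_smul_qMonomial hcd hcD hdD, smul_smul, ← Units.val_mul,
    Nat.cast_mul_sub_one]

theorem smul_gammaTwo_mul_gammaTwoBar
    (hcd : (cu : A) * d = ((q⁻¹ : kˣ) : k) • (d * (cu : A)))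
    (hcD : (cu : A) * (Du : A) = (((q ^ 2)⁻¹ : kˣ) : k) • ((Du : A) * (cu : A)))
    (hdD : d * (Du : A) = (Du : A) * d) (p m : ℤ) (j s : ℕ) :
    ((q ^ (j * s) : kˣ) : k) •
      (gammaTwo q d cu Du bH (bH (p, m + j, s)) *
        gammaTwoBar q d cu Du bH (bH (p + s, m - s, j)))
      = (-1 : k) ^ s • (((q ^ (3 * ((j + s : ℕ) : ℤ) ^ 2 - (j + s : ℕ) - (j + s : ℕ) * m
          + 2 * (j + s : ℕ) * p)) : kˣ) : k) •
          qMonomial d cu Du (-((j + s : ℕ) : ℤ)) (j + s : ℕ) (j + s) := by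
  rw [gammaTwo_basis, gammaTwoBar_basis bH hcd hcD hdD, smul_mul_smul_comm,
    qMonomial_mul hcd hcD hdD,
    show p + (-(j : ℤ) - (p + s)) = -((j + s : ℕ) : ℤ) by push_cast; ring,
    show m + j + -(m - s) = ((j + s : ℕ) : ℤ) by push_cast; ring, Nat.add_comm s j, smul_smul,
    smul_smul, smul_smul]
  congr 1
  rw [show (-1 : k) ^ s = (((-1 : kˣ) ^ (s : ℤ) : kˣ) : k) by simp]
  simp only [← Units.val_mul]
  congr 1
  -- compare the exponents of `-1` and `q`, the former only modulo `2`
  apply Additive.ofMul.injective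
  rw [← zpow_natCast q, ← neg_one_mul q]
  simp only [ofMul_mul, ofMul_zpow, mul_zpow]
  push_cast
  linear_combination (norm := module) p • Units.two_zsmul_ofMul_neg_one (M := k)

theorem smul_gammaTwoBar_mul_gammaTwo
    (hcd : (cu : A) * d = ((q⁻¹ : kˣ) : k) • (d * (cu : A)))
    (hcD : (cu : A) * (Du : A) = (((q ^ 2)⁻¹ : kˣ) : k) • ((Du : A) * (cu : A)))
    (hdD : d * (Du : A) = (Du : A) * d) (p m : ℤ) (j s : ℕ) :
    ((q ^ (j * s) : kˣ) : k) •
      (gammaTwoBar q d cu Du bH (bH (p, m + j, s)) *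
        gammaTwo q d cu Du bH (bH (p + s, m - s, j)))
      = (-1 : k) ^ s • qMonomial d cu Du 0 (-((j + s : ℕ) : ℤ)) (j + s) := by
  rw [gammaTwo_basis, gammaTwoBar_basis bH hcd hcD hdD, smul_mul_smul_comm,
    qMonomial_mul hcd hcD hdD, show -(s : ℤ) - p + (p + s) = 0 by ring,
    show -(m + j) + (m - s) = -((j + s : ℕ) : ℤ) by push_cast; ring, Nat.add_comm s j,
    smul_smul, smul_smul]
  congr 1
  rw [show (-1 : k) ^ s = (((-1 : kˣ) ^ (s : ℤ) : kˣ) : k) by simp]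
  simp only [← Units.val_mul]
  congr 1
  apply Additive.ofMul.injective
  rw [← zpow_natCast q, ← neg_one_mul q]
  simp only [ofMul_mul, ofMul_zpow, mul_zpow]
  push_cast
  linear_combination (norm := module) p • Units.two_zsmul_ofMul_neg_one (M := k)

end Gamma

/-- The map `γ₂ : H → A₂`, `γ₂(D̃^p t^m n^r) = (-1)^p q^p D^p c^m d^r`, is convolution
invertible with convolution inverse `γ̄₂(D̃^p t^m n^r) = (-1)^p q^{-p + r(r-1)} d^r c^{-m} D^{-r-p}`. -/
theorem gammaTwo_convolution_invertible (q : kˣ)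
    (d : A) (cu Du : Aˣ) (t Dt : Hˣ) (n : H)
    (bH : Module.Basis (ℤ × ℤ × ℕ) k H)
    (hbH : ∀ (p m : ℤ) (r : ℕ),
      bH (p, m, r) = ((Dt ^ p : Hˣ) : H) * ((t ^ m : Hˣ) : H) * n ^ r)
    (hgt : ∀ m : ℤ, Coalgebra.comul (R := k) ((t ^ m : Hˣ) : H) =
      ((t ^ m : Hˣ) : H) ⊗ₜ[k] ((t ^ m : Hˣ) : H))
    (hgD : ∀ p : ℤ, Coalgebra.comul (R := k) ((Dt ^ p : Hˣ) : H) =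
      ((Dt ^ p : Hˣ) : H) ⊗ₜ[k] ((Dt ^ p : Hˣ) : H))
    (hΔnr : ∀ r : ℕ, Coalgebra.comul (R := k) (n ^ r) =
      ∑ j ∈ Finset.range (r + 1),
        ((r.choose j : k) * ((q ^ (j * (r - j)) : kˣ) : k)) •
          ((((t ^ j : Hˣ) : H) * n ^ (r - j)) ⊗ₜ[k]
            (((Dt ^ (r - j) : Hˣ) : H) * ((t ^ ((j : ℤ) - (r : ℤ)) : Hˣ) : H) * n ^ j)))
    (hεt : ∀ m : ℤ, Coalgebra.counit (R := k) ((t ^ m : Hˣ) : H) = 1)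
    (hεD : ∀ p : ℤ, Coalgebra.counit (R := k) ((Dt ^ p : Hˣ) : H) = 1)
    (hεn : Coalgebra.counit (R := k) n = 0)
    -- commutation relations in `A₂`
    (hcd : (cu : A) * d = ((q⁻¹ : kˣ) : k) • (d * (cu : A)))
    (hcD : (cu : A) * (Du : A) = (((q ^ 2)⁻¹ : kˣ) : k) • ((Du : A) * (cu : A)))
    (hdD : d * (Du : A) = (Du : A) * d) :
    conv (gammaTwo q d cu Du bH) (gammaTwoBar q d cu Du bH) =
      (Algebra.linearMap k A) ∘ₗ (Coalgebra.counit (R := k) (A := H)) ∧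
    conv (gammaTwoBar q d cu Du bH) (gammaTwo q d cu Du bH) =
      (Algebra.linearMap k A) ∘ₗ (Coalgebra.counit (R := k) (A := H)) := by
  have htD : Commute t Dt := commute_of_comul_pow q t Dt n bH hbH hgt hgD hΔnr
  have hcomul := comul_basis q t Dt n bH hbH hgt hgD hΔnr htD
  have hcounit := counit_basis t Dt n bH hbH hεt hεD hεn
  exact ⟨conv_eq_linearMap_comp_counit_of_alternating q bH hcomul hcounit _ _
      (fun p m r => ((q ^ (3 * (r : ℤ) ^ 2 - r - r * m + 2 * r * p) : kˣ) : k) •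
        qMonomial d cu Du (-r) r r)
      (smul_gammaTwo_mul_gammaTwoBar bH hcd hcD hdD) (by simp [qMonomial]),
    conv_eq_linearMap_comp_counit_of_alternating q bH hcomul hcounit _ _
      (fun _ _ r => qMonomial d cu Du 0 (-r) r)
      (smul_gammaTwoBar_mul_gammaTwo bH hcd hcD hdD) (by simp [qMonomial])⟩
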